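/- Let A be a complex Banach *-algebra. For every x₀ ∈ A* and b ∈ A, the inner Jordan derivation δ_{x₀,b} : a ↦ (x₀∘a)∘b − (b∘a)∘x₀ from A to A* equals the inner binary derivation D_{(1/4)[b,x₀]} : a ↦ (1/4)([b,x₀]a − a[b,x₀]), where [b,x₀] := bx₀ − x₀b ∈ A*. Consequently, every inner Jordan derivation from A to A* is an inner binary derivation. -/
import Mathlib


/-!
STATEMENT 8: Let `A` be a complex Banach `*`-algebra.  For every `x₀ ∈ A*` and `b ∈ A`,
the inner Jordan derivation `δ_{x₀,b} : a ↦ (x₀∘a)∘b − (b∘a)∘x₀` from `A` to `A*`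
equals the inner binary derivation `D_{(1/4)[b,x₀]} : a ↦ (1/4)([b,x₀]a − a[b,x₀])`,
where `[b,x₀] := b x₀ − x₀ b ∈ A*`, so `[b,x₀](y) = x₀(y b) − x₀(b y)`.
Consequently every inner Jordan derivation from `A` to `A*` is an inner binary derivation.

Here the module actions are `(aφ)(y) := φ(ya)`, `(φa)(y) := φ(ay)` and
`(φ∘a)(x) := φ(a∘x)`; in particular `δ_{x₀,b}(a)(y) = x₀(a∘(b∘y)) − x₀((b∘a)∘y)`
and `D_ψ(a)(y) = ψ(a y) − ψ(y a)`.
-/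

open scoped ComplexConjugate

noncomputable section

variable {A : Type*} [NonUnitalNormedRing A] [StarRing A] [NormedSpace ℂ A]
  [IsScalarTower ℂ A A] [SMulCommClass ℂ A A] [StarModule ℂ A] [CompleteSpace A]

/-- The Jordan product `a∘b = (ab+ba)/2`. -/
def jord (a b : A) : A := (2 : ℂ)⁻¹ • (a * b + b * a)

/-- `D : A → A*` is an inner Jordan derivation: a finite sum of the maps
`δ_{x₀,b} : a ↦ (x₀∘a)∘b − (b∘a)∘x₀`, i.e. pointwise
`a ↦ (y ↦ x₀(a∘(b∘y)) − x₀((b∘a)∘y))`. -/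
def IsInnerJordanDer (D : A →L[ℂ] (A →L[ℂ] ℂ)) : Prop :=
  ∃ (n : ℕ) (x₀ : Fin n → (A →L[ℂ] ℂ)) (b : Fin n → A),
    ∀ a y : A, D a y
      = ∑ i, (x₀ i (jord a (jord (b i) y)) - x₀ i (jord (jord (b i) a) y))

/-- `D : A → A*` is an inner binary derivation: `D = D_ψ : a ↦ ψa − aψ` for some
`ψ ∈ A*`, i.e. pointwise `D(a)(y) = ψ(a y) − ψ(y a)`. -/
def IsInnerBinaryDer (D : A →L[ℂ] (A →L[ℂ] ℂ)) : Prop :=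
  ∃ ψ : A →L[ℂ] ℂ, ∀ a y : A, D a y = ψ (a * y) - ψ (y * a)

/-- The inner Jordan derivation `δ_{x₀,b}` equals the inner binary derivation
`D_{(1/4)[b,x₀]}`; consequently, every inner Jordan derivation from `A` to `A*`
is an inner binary derivation. -/
theorem innerJordanDer_eq_innerBinaryDer :
    (∀ (x₀ : A →L[ℂ] ℂ) (b : A) (a y : A),
      x₀ (jord a (jord b y)) - x₀ (jord (jord b a) y)
        = (4 : ℂ)⁻¹ * ((x₀ (a * y * b) - x₀ (b * (a * y)))
            - (x₀ (y * a * b) - x₀ (b * (y * a)))))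
    ∧ (∀ D : A →L[ℂ] (A →L[ℂ] ℂ), IsInnerJordanDer D → IsInnerBinaryDer D) := by
  have key : ∀ (x₀ : A →L[ℂ] ℂ) (b : A) (a y : A),
      x₀ (jord a (jord b y)) - x₀ (jord (jord b a) y)
        = (4 : ℂ)⁻¹ * ((x₀ (a * y * b) - x₀ (b * (a * y)))
            - (x₀ (y * a * b) - x₀ (b * (y * a)))) := by
    intro x₀ b a y
    simp only [jord, smul_add, mul_smul_comm, smul_mul_assoc, map_add, map_smul,
      mul_add, add_mul, smul_eq_mul, mul_assoc]
    ring
  refine ⟨key, ?_⟩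
  rintro D ⟨n, x₀, b, hD⟩
  refine ⟨∑ i, (4 : ℂ)⁻¹ • ((x₀ i).comp
      ((ContinuousLinearMap.mul ℂ A).flip (b i) - ContinuousLinearMap.mul ℂ A (b i))), ?_⟩
  intro a y
  rw [hD]
  simp only [ContinuousLinearMap.sum_apply, ContinuousLinearMap.smul_apply,
    ContinuousLinearMap.comp_apply, ContinuousLinearMap.sub_apply,
    ContinuousLinearMap.flip_apply, ContinuousLinearMap.mul_apply', map_sub,
    smul_eq_mul, ← Finset.sum_sub_distrib]
  refine Finset.sum_congr rfl fun i _ => ?_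
  rw [key (x₀ i) (b i) a y]
  ring
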